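/- (Main lemma, Lemma 1 of the paper) Let W = W_{1:n} be a finitely-valued random variable (a sentence), T = g(W) a deterministic annotation, and x, x̃ deterministic functions of W representing embeddings of a token W_i (itself a function of W). Define ρ := I[T;W]/H[W] and σ := I[W_i; x]/H[W], with H[W] > 0. Suppose I[T; x̃] = 0 and ρ > 1 - σ. Then I[W_i; x̃] < I[W_i; x], and moreover I[W_i; x] - I[W_i; x̃] ≥ (ρ + σ - 1)·H[W]. -/
import Mathlib


open Real

variable {Ω : Type*} [Fintype Ω]

/-- Distribution (probability mass) of a random variable `X` under weights `p`. -/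
noncomputable def rvDist {α : Type*} [Fintype α] [DecidableEq α]
    (p : Ω → ℝ) (X : Ω → α) (x : α) : ℝ :=
  ∑ ω ∈ Finset.univ.filter (fun ω => X ω = x), p ω

/-- The joint random variable `(X, Y)`. -/
def jointRV {α β : Type*} (X : Ω → α) (Y : Ω → β) : Ω → α × β :=
  fun ω => (X ω, Y ω)

/-- Shannon entropy `H[X] = -∑ₓ p(x) log p(x)`. -/
noncomputable def entropy {α : Type*} [Fintype α] [DecidableEq α]
    (p : Ω → ℝ) (X : Ω → α) : ℝ :=
  ∑ x, Real.negMulLog (rvDist p X x)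

/-- Conditional entropy `H[Y ∣ X] = -∑_{x,y} p(x,y) log p(y ∣ x)`. -/
noncomputable def condEntropy {α β : Type*} [Fintype α] [DecidableEq α]
    [Fintype β] [DecidableEq β] (p : Ω → ℝ) (X : Ω → α) (Y : Ω → β) : ℝ :=
  -∑ x, ∑ y, rvDist p (jointRV X Y) (x, y) *
      Real.log (rvDist p (jointRV X Y) (x, y) / rvDist p X x)

/-- Mutual information `I[X;Y] = ∑_{x,y} p(x,y) log (p(x,y)/(p(x)p(y)))`. -/
noncomputable def mutualInfo {α β : Type*} [Fintype α] [DecidableEq α]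
    [Fintype β] [DecidableEq β] (p : Ω → ℝ) (X : Ω → α) (Y : Ω → β) : ℝ :=
  ∑ x, ∑ y, rvDist p (jointRV X Y) (x, y) *
      Real.log (rvDist p (jointRV X Y) (x, y) / (rvDist p X x * rvDist p Y y))

/-- `p` is a probability mass function on the finite sample space `Ω`. -/
def IsProbMass (p : Ω → ℝ) : Prop :=
  (∀ ω, 0 ≤ p ω) ∧ ∑ ω, p ω = 1

/-- Independence of two finitely-valued random variables. -/
def Indep {α β : Type*} [Fintype α] [DecidableEq α] [Fintype β] [DecidableEq β]
    (p : Ω → ℝ) (X : Ω → α) (Y : Ω → β) : Prop :=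
  ∀ x y, rvDist p (jointRV X Y) (x, y) = rvDist p X x * rvDist p Y y

section Helpers

open Finset

variable {α' β' γ' ι : Type*} [Fintype α'] [DecidableEq α'] [Fintype β'] [DecidableEq β']
  [Fintype γ'] [DecidableEq γ'] {p : Ω → ℝ}

lemma rvDist_nonneg (hp : IsProbMass p) (X : Ω → α') (x : α') : 0 ≤ rvDist p X x :=
  Finset.sum_nonneg fun ω _ => hp.1 ω

lemma jointRV_dist_filter (X : Ω → α') (Y : Ω → β') (x : α') (y : β') :
    rvDist p (jointRV X Y) (x, y)
      = ∑ ω ∈ (Finset.univ.filter (fun ω => X ω = x)).filter (fun ω => Y ω = y), p ω := by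
  unfold rvDist jointRV
  rw [Finset.filter_filter]
  apply Finset.sum_congr _ (fun _ _ => rfl)
  ext ω
  simp [Prod.ext_iff]

lemma jointRV_dist_filter' (X : Ω → α') (Y : Ω → β') (x : α') (y : β') :
    rvDist p (jointRV X Y) (x, y)
      = ∑ ω ∈ (Finset.univ.filter (fun ω => Y ω = y)).filter (fun ω => X ω = x), p ω := by
  unfold rvDist jointRV
  rw [Finset.filter_filter]
  apply Finset.sum_congr _ (fun _ _ => rfl)
  ext ω
  simp [Prod.ext_iff, and_comm]

lemma jointRV_swap (X : Ω → α') (Y : Ω → β') (x : α') (y : β') :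
    rvDist p (jointRV X Y) (x, y) = rvDist p (jointRV Y X) (y, x) := by
  rw [jointRV_dist_filter, jointRV_dist_filter' Y X]

lemma sum_joint_right (X : Ω → α') (Y : Ω → β') (x : α') :
    ∑ y, rvDist p (jointRV X Y) (x, y) = rvDist p X x := by
  simp_rw [jointRV_dist_filter X Y x]
  exact Finset.sum_fiberwise _ _ _

lemma sum_joint_left (X : Ω → α') (Y : Ω → β') (y : β') :
    ∑ x, rvDist p (jointRV X Y) (x, y) = rvDist p Y y := by
  simp_rw [jointRV_dist_filter' X Y]
  exact Finset.sum_fiberwise _ _ _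

lemma joint_le_left (hp : IsProbMass p) (X : Ω → α') (Y : Ω → β') (x : α') (y : β') :
    rvDist p (jointRV X Y) (x, y) ≤ rvDist p X x := by
  rw [jointRV_dist_filter]
  exact Finset.sum_le_sum_of_subset_of_nonneg (Finset.filter_subset _ _)
    (fun ω _ _ => hp.1 ω)

lemma joint_le_right (hp : IsProbMass p) (X : Ω → α') (Y : Ω → β') (x : α') (y : β') :
    rvDist p (jointRV X Y) (x, y) ≤ rvDist p Y y := by
  rw [jointRV_swap]
  exact joint_le_left hp Y X y x

lemma rvDist_comp (X : Ω → α') (f : α' → β') (b : β') :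
    rvDist p (fun ω => f (X ω)) b
      = ∑ a ∈ Finset.univ.filter (fun a => f a = b), rvDist p X a := by
  rw [Finset.sum_filter]
  show ∑ ω ∈ Finset.univ.filter (fun ω => f (X ω) = b), p ω = _
  rw [← Finset.sum_fiberwise (Finset.univ.filter (fun ω => f (X ω) = b)) X p]
  apply Finset.sum_congr rfl
  intro a _
  rw [Finset.filter_filter]
  by_cases h : f a = b
  · rw [if_pos h]
    apply Finset.sum_congr _ (fun _ _ => rfl)
    ext ω
    simp only [Finset.mem_filter, Finset.mem_univ, true_and]
    constructor
    · exact fun hx => hx.2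
    · intro hx; exact ⟨by rw [hx, h], hx⟩
  · rw [if_neg h]
    apply Finset.sum_eq_zero
    intro ω hω
    simp only [Finset.mem_filter, Finset.mem_univ, true_and] at hω
    exact absurd (hω.2 ▸ hω.1) h

lemma rvDist_comp_joint (X : Ω → α') (Y : Ω → γ') (f : α' → β') (b : β') (y : γ') :
    rvDist p (jointRV (fun ω => f (X ω)) Y) (b, y)
      = ∑ a ∈ Finset.univ.filter (fun a => f a = b), rvDist p (jointRV X Y) (a, y) := by
  rw [Finset.sum_filter]
  show ∑ ω ∈ Finset.univ.filter (fun ω => (f (X ω), Y ω) = (b, y)), p ω = _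
  rw [← Finset.sum_fiberwise (Finset.univ.filter (fun ω => (f (X ω), Y ω) = (b, y))) X p]
  apply Finset.sum_congr rfl
  intro a _
  rw [Finset.filter_filter]
  by_cases h : f a = b
  · rw [if_pos h]
    show _ = rvDist p (jointRV X Y) (a, y)
    unfold rvDist jointRV
    apply Finset.sum_congr _ (fun _ _ => rfl)
    ext ω
    simp only [Finset.mem_filter, Finset.mem_univ, true_and, Prod.ext_iff]
    constructor
    · rintro ⟨⟨_, h2⟩, h3⟩; exact ⟨h3, h2⟩
    · rintro ⟨h3, h2⟩; exact ⟨⟨by rw [h3, h], h2⟩, h3⟩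
  · rw [if_neg h]
    apply Finset.sum_eq_zero
    intro ω hω
    simp only [Finset.mem_filter, Finset.mem_univ, true_and, Prod.ext_iff] at hω
    exact absurd (hω.2 ▸ hω.1.1) h

lemma rvDist_comp_joint' (X : Ω → α') (Y : Ω → γ') (f : α' → β') (b : β') (y : γ') :
    rvDist p (jointRV Y (fun ω => f (X ω))) (y, b)
      = ∑ a ∈ Finset.univ.filter (fun a => f a = b), rvDist p (jointRV Y X) (y, a) := by
  rw [jointRV_swap, rvDist_comp_joint]
  exact Finset.sum_congr rfl fun a _ => jointRV_swap X Y a y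

lemma mutualInfo_eq (hp : IsProbMass p) (X : Ω → α') (Y : Ω → β') :
    mutualInfo p X Y = entropy p Y - condEntropy p X Y := by
  unfold mutualInfo condEntropy entropy
  have key : ∀ x y, rvDist p (jointRV X Y) (x, y) *
      Real.log (rvDist p (jointRV X Y) (x, y) / (rvDist p X x * rvDist p Y y))
      = rvDist p (jointRV X Y) (x, y) *
          Real.log (rvDist p (jointRV X Y) (x, y) / rvDist p X x)
        - rvDist p (jointRV X Y) (x, y) * Real.log (rvDist p Y y) := by
    intro x y
    by_cases hj : rvDist p (jointRV X Y) (x, y) = 0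
    · simp [hj]
    · have hj' : 0 < rvDist p (jointRV X Y) (x, y) :=
        lt_of_le_of_ne (rvDist_nonneg hp _ _) (Ne.symm hj)
      have hx : 0 < rvDist p X x := lt_of_lt_of_le hj' (joint_le_left hp X Y x y)
      have hy : 0 < rvDist p Y y := lt_of_lt_of_le hj' (joint_le_right hp X Y x y)
      rw [Real.log_div hj (by positivity), Real.log_div hj hx.ne',
        Real.log_mul hx.ne' hy.ne']
      ring
  simp_rw [key, Finset.sum_sub_distrib]
  have h2 : ∑ x, ∑ y, rvDist p (jointRV X Y) (x, y) * Real.log (rvDist p Y y)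
      = ∑ y, rvDist p Y y * Real.log (rvDist p Y y) := by
    rw [Finset.sum_comm]
    apply Finset.sum_congr rfl
    intro y _
    rw [← Finset.sum_mul, sum_joint_left]
  rw [h2]
  have h3 : ∑ y, Real.negMulLog (rvDist p Y y)
      = -∑ y, rvDist p Y y * Real.log (rvDist p Y y) := by
    simp [Real.negMulLog, Finset.sum_neg_distrib]
  rw [h3]
  ring

lemma mutualInfo_comm (X : Ω → α') (Y : Ω → β') :
    mutualInfo p X Y = mutualInfo p Y X := by
  unfold mutualInfo
  rw [Finset.sum_comm]
  apply Finset.sum_congr rfl; intro y _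
  apply Finset.sum_congr rfl; intro x _
  rw [jointRV_swap, mul_comm (rvDist p X x)]

lemma condEntropy_nonneg (hp : IsProbMass p) (X : Ω → α') (Y : Ω → β') :
    0 ≤ condEntropy p X Y := by
  unfold condEntropy
  rw [neg_nonneg]
  apply Finset.sum_nonpos
  intro x _
  apply Finset.sum_nonpos
  intro y _
  by_cases hj : rvDist p (jointRV X Y) (x, y) = 0
  · simp [hj]
  · have hj' : 0 < rvDist p (jointRV X Y) (x, y) :=
      lt_of_le_of_ne (rvDist_nonneg hp _ _) (Ne.symm hj)
    have hx : 0 < rvDist p X x := lt_of_lt_of_le hj' (joint_le_left hp X Y x y)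
    apply mul_nonpos_of_nonneg_of_nonpos hj'.le
    apply Real.log_nonpos (by positivity)
    exact div_le_one_of_le₀ (joint_le_left hp X Y x y) hx.le

lemma condEntropy_deterministic (X : Ω → α') (g : α' → β') :
    condEntropy p X (fun ω => g (X ω)) = 0 := by
  have key : ∀ x t, rvDist p (jointRV X (fun ω => g (X ω))) (x, t)
      = if g x = t then rvDist p X x else 0 := by
    intro x t
    unfold rvDist jointRV
    by_cases h : g x = t
    · rw [if_pos h]
      apply Finset.sum_congr _ (fun _ _ => rfl)
      ext ω
      simp only [Finset.mem_filter, Finset.mem_univ, true_and, Prod.ext_iff]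
      constructor
      · exact fun hx => hx.1
      · intro hx; exact ⟨hx, by rw [hx, h]⟩
    · rw [if_neg h]
      apply Finset.sum_eq_zero
      intro ω hω
      simp only [Finset.mem_filter, Finset.mem_univ, true_and, Prod.ext_iff] at hω
      exact absurd (hω.1 ▸ hω.2) h
  unfold condEntropy
  rw [neg_eq_zero]
  apply Finset.sum_eq_zero
  intro x _
  apply Finset.sum_eq_zero
  intro t _
  rw [key]
  by_cases h : g x = t
  · rw [if_pos h]
    by_cases hx : rvDist p X x = 0
    · simp [hx]
    · rw [div_self hx, Real.log_one, mul_zero]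
  · rw [if_neg h, zero_mul]

end Helpers
section Helpers2

variable {α' β' γ' : Type*} [Fintype α'] [DecidableEq α'] [Fintype β'] [DecidableEq β']
  [Fintype γ'] [DecidableEq γ'] {p : Ω → ℝ}

/-- The log-sum inequality (in the direction with dominated numerators). -/
lemma log_sum_ineq {ι : Type*} (s : Finset ι) (a b : ι → ℝ) (ha : ∀ i ∈ s, 0 ≤ a i)
    (hab : ∀ i ∈ s, a i ≤ b i) :
    (∑ i ∈ s, a i) * Real.log ((∑ i ∈ s, a i) / (∑ i ∈ s, b i))
      ≤ ∑ i ∈ s, a i * Real.log (a i / b i) := by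
  have hb : ∀ i ∈ s, 0 ≤ b i := fun i hi => le_trans (ha i hi) (hab i hi)
  set A := ∑ i ∈ s, a i with hA
  set B := ∑ i ∈ s, b i with hB
  by_cases hB0 : B = 0
  · have hbz : ∀ i ∈ s, b i = 0 := by
      intro i hi
      exact le_antisymm (hB0 ▸ Finset.single_le_sum hb hi) (hb i hi)
    have haz : ∀ i ∈ s, a i = 0 := fun i hi =>
      le_antisymm ((hab i hi).trans (hbz i hi).le) (ha i hi)
    have hA0 : A = 0 := Finset.sum_eq_zero haz
    rw [hA0, zero_mul]
    apply Finset.sum_nonneg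
    intro i hi
    rw [haz i hi]; simp
  · have hBpos : 0 < B := lt_of_le_of_ne (Finset.sum_nonneg hb) (Ne.symm hB0)
    have jensen := Real.convexOn_mul_log.map_sum_le (t := s) (w := fun i => b i / B)
      (p := fun i => a i / b i)
      (fun i hi => div_nonneg (hb i hi) (Finset.sum_nonneg hb))
      (by rw [← Finset.sum_div, ← hB, div_self hB0])
      (fun i hi => Set.mem_Ici.mpr (div_nonneg (ha i hi) (hb i hi)))
    have e1 : ∑ i ∈ s, (b i / B) • (a i / b i) = A / B := by
      rw [hA, Finset.sum_div]
      apply Finset.sum_congr rfl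
      intro i hi
      by_cases hbi : b i = 0
      · have hai : a i = 0 := le_antisymm ((hab i hi).trans hbi.le) (ha i hi)
        simp [hbi, hai]
      · rw [smul_eq_mul]; field_simp
    have e2 : ∑ i ∈ s, (b i / B) • ((a i / b i) * Real.log (a i / b i))
        = (∑ i ∈ s, a i * Real.log (a i / b i)) / B := by
      rw [Finset.sum_div]
      apply Finset.sum_congr rfl
      intro i hi
      by_cases hbi : b i = 0
      · have hai : a i = 0 := le_antisymm ((hab i hi).trans hbi.le) (ha i hi)
        simp [hbi, hai]
      · rw [smul_eq_mul]; field_simp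
    rw [e1, e2] at jensen
    have h := mul_le_mul_of_nonneg_right jensen hBpos.le
    rw [div_mul_cancel₀ _ hB0] at h
    have hL : A * Real.log (A / B) = (A / B * Real.log (A / B)) * B := by
      field_simp
    rw [hL]
    exact h

/-- Data processing for the conditioned variable: `H[g(Y) | X] ≤ H[Y | X]`. -/
lemma condEntropy_comp_right_le (hp : IsProbMass p) (X : Ω → α') (Y : Ω → β') (g : β' → γ') :
    condEntropy p X (fun ω => g (Y ω)) ≤ condEntropy p X Y := by
  unfold condEntropy
  rw [neg_le_neg_iff]
  apply Finset.sum_le_sum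
  intro x _
  rw [← Finset.sum_fiberwise (Finset.univ) g
    (fun b => rvDist p (jointRV X Y) (x, b) *
      Real.log (rvDist p (jointRV X Y) (x, b) / rvDist p X x))]
  apply Finset.sum_le_sum
  intro t _
  have hJ : rvDist p (jointRV X (fun ω => g (Y ω))) (x, t)
      = ∑ b ∈ Finset.univ.filter (fun b => g b = t), rvDist p (jointRV X Y) (x, b) :=
    rvDist_comp_joint' Y X g t x
  rw [hJ]
  set J := ∑ b ∈ Finset.univ.filter (fun b => g b = t), rvDist p (jointRV X Y) (x, b) with hJdef
  calc ∑ b ∈ Finset.univ.filter (fun b => g b = t),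
        rvDist p (jointRV X Y) (x, b) *
          Real.log (rvDist p (jointRV X Y) (x, b) / rvDist p X x)
      ≤ ∑ b ∈ Finset.univ.filter (fun b => g b = t),
        rvDist p (jointRV X Y) (x, b) * Real.log (J / rvDist p X x) := by
        apply Finset.sum_le_sum
        intro b hb
        by_cases hj : rvDist p (jointRV X Y) (x, b) = 0
        · rw [hj]; simp
        · have hj' : 0 < rvDist p (jointRV X Y) (x, b) :=
            lt_of_le_of_ne (rvDist_nonneg hp _ _) (Ne.symm hj)
          have hx : 0 < rvDist p X x := lt_of_lt_of_le hj' (joint_le_left hp X Y x b)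
          have hjJ : rvDist p (jointRV X Y) (x, b) ≤ J :=
            Finset.single_le_sum (fun i _ => rvDist_nonneg hp _ _) hb
          apply mul_le_mul_of_nonneg_left _ hj'.le
          apply Real.log_le_log (by positivity)
          exact div_le_div_of_nonneg_right hjJ hx.le
    _ = J * Real.log (J / rvDist p X x) := by rw [← Finset.sum_mul]

/-- Data processing for the conditioning variable: `H[Y | X] ≤ H[Y | f(X)]`. -/
lemma condEntropy_le_comp_left (hp : IsProbMass p) (X : Ω → α') (Y : Ω → β') (f : α' → γ') :
    condEntropy p X Y ≤ condEntropy p (fun ω => f (X ω)) Y := by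
  unfold condEntropy
  rw [neg_le_neg_iff]
  rw [← Finset.sum_fiberwise (Finset.univ) f
    (fun x => ∑ y, rvDist p (jointRV X Y) (x, y) *
      Real.log (rvDist p (jointRV X Y) (x, y) / rvDist p X x))]
  apply Finset.sum_le_sum
  intro t _
  rw [Finset.sum_comm]
  apply Finset.sum_le_sum
  intro y _
  rw [rvDist_comp_joint X Y f t y, rvDist_comp X f t]
  exact log_sum_ineq _ _ _ (fun x _ => rvDist_nonneg hp _ _)
    (fun x _ => joint_le_left hp X Y x y)

end Helpers2
/-- Main lemma, Lemma 1 of the paper. -/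
theorem main_lemma {α β γ δ τ : Type*} [Fintype α] [DecidableEq α]
    [Fintype β] [DecidableEq β] [Fintype γ] [DecidableEq γ]
    [Fintype δ] [DecidableEq δ] [Fintype τ] [DecidableEq τ]
    (p : Ω → ℝ) (hp : IsProbMass p)
    (W : Ω → α)            -- the sentence
    (wi : α → β)           -- the token `Wᵢ = wi(W)`
    (g : α → τ)            -- the annotation `T = g(W)`
    (e : α → γ)            -- the embedding `x = e(W)`
    (et : α → δ)           -- the filtered embedding `x̃ = et(W)`
    (hW : 0 < entropy p W)
    (ρ : ℝ) (hρ : ρ = mutualInfo p (fun ω => g (W ω)) W / entropy p W)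
    (σ : ℝ) (hσ : σ = mutualInfo p (fun ω => wi (W ω)) (fun ω => e (W ω)) / entropy p W)
    (hzero : mutualInfo p (fun ω => g (W ω)) (fun ω => et (W ω)) = 0)
    (hρσ : ρ > 1 - σ) :
    mutualInfo p (fun ω => wi (W ω)) (fun ω => et (W ω)) <
      mutualInfo p (fun ω => wi (W ω)) (fun ω => e (W ω)) ∧
    mutualInfo p (fun ω => wi (W ω)) (fun ω => e (W ω)) -
      mutualInfo p (fun ω => wi (W ω)) (fun ω => et (W ω)) ≥
      (ρ + σ - 1) * entropy p W := by
  have hHne : entropy p W ≠ 0 := hW.ne'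
  have hρH : mutualInfo p (fun ω => g (W ω)) W = ρ * entropy p W := by
    rw [hρ, div_mul_cancel₀ _ hHne]
  have hσH : mutualInfo p (fun ω => wi (W ω)) (fun ω => e (W ω)) = σ * entropy p W := by
    rw [hσ, div_mul_cancel₀ _ hHne]
  -- entropy of the annotation T = g ∘ W
  have hentT : entropy p (fun ω => g (W ω)) = ρ * entropy p W := by
    have h1 := mutualInfo_eq hp W (fun ω => g (W ω))
    rw [condEntropy_deterministic W g] at h1
    have h2 := mutualInfo_comm (p := p) (fun ω => g (W ω)) W
    linarith [hρH]
  -- since I[T; x̃] = 0, we get H[T ∣ x̃] = H[T] = ρ H[W]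
  have hcond_xt_T : condEntropy p (fun ω => et (W ω)) (fun ω => g (W ω))
      = ρ * entropy p W := by
    have h2 := mutualInfo_eq hp (fun ω => et (W ω)) (fun ω => g (W ω))
    have h3 : mutualInfo p (fun ω => et (W ω)) (fun ω => g (W ω)) = 0 := by
      rw [mutualInfo_comm]; exact hzero
    rw [h3, hentT] at h2
    linarith
  -- data processing: H[T ∣ x̃] ≤ H[W ∣ x̃]
  have dpA : condEntropy p (fun ω => et (W ω)) (fun ω => g (W ω))
      ≤ condEntropy p (fun ω => et (W ω)) W :=
    condEntropy_comp_right_le hp _ W g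
  -- hence I[W; x̃] ≤ (1 - ρ) H[W]
  have hWxt : mutualInfo p W (fun ω => et (W ω)) ≤ (1 - ρ) * entropy p W := by
    have h4 := mutualInfo_eq hp (fun ω => et (W ω)) W
    have h5 := mutualInfo_comm (p := p) W (fun ω => et (W ω))
    nlinarith [hcond_xt_T, dpA]
  -- data processing: I[Wᵢ; x̃] ≤ I[W; x̃]
  have dpB : condEntropy p W (fun ω => et (W ω))
      ≤ condEntropy p (fun ω => wi (W ω)) (fun ω => et (W ω)) :=
    condEntropy_le_comp_left hp W _ wi
  have hWixt : mutualInfo p (fun ω => wi (W ω)) (fun ω => et (W ω))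
      ≤ mutualInfo p W (fun ω => et (W ω)) := by
    have h5 := mutualInfo_eq hp (fun ω => wi (W ω)) (fun ω => et (W ω))
    have h6 := mutualInfo_eq hp W (fun ω => et (W ω))
    linarith
  have key : mutualInfo p (fun ω => wi (W ω)) (fun ω => et (W ω))
      ≤ (1 - ρ) * entropy p W := le_trans hWixt hWxt
  have hring : (1 - ρ) * entropy p W + (ρ + σ - 1) * entropy p W = σ * entropy p W := by
    ring
  constructor
  · nlinarith [mul_pos (show (0:ℝ) < ρ + σ - 1 by linarith) hW]
  · linarith
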